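/- arXiv:1305.6683 — 2 statements merged into one kernel-verified Lean document; each statement's English description precedes it below -/
import Mathlib

section
/- Let φ : (0,∞) → (0,∞) be an increasing C¹ bijection onto its range such that t ↦ t φ'(t) is monotone increasing, with φ(t) ≤ c₁ t φ'(t) and φ(2t) ≤ c₀ φ(t) for all t. Fix ρ > 0, a unit vector y', and ξ ∈ ℝⁿ with y'·ξ ≠ 0. Define B(t,ξ) = t^{−ρ} ∫_{t/2}^{t} e^{−i φ(r) y'·ξ} r^{ρ−1} dr. Then |B(t,ξ)| ≤ C c₀ c₁ / (φ(t) |y'·ξ|) for a constant C depending only on ρ; moreover |B(t,ξ)| ≤ 1/ρ always. -/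
/-!
With `θ = ⟪y', ξ⟫`, write `r ^ (ρ - 1) e^{-iθφ(r)} = r ^ ρ · (r φ'(r))⁻¹ · φ'(r) e^{-iθφ(r)}`.
The last factor is the derivative of `(i/θ) e^{-iθφ(r)}`, so its integral over any subinterval
has norm at most `2/|θ|`. The weights `r ^ ρ` and `(r φ'(r))⁻¹` are increasing and decreasing,
so two applications of the second mean value theorem, in the form
`‖∫ₐᵇ g f‖ ≤ g b · sup_c ‖∫_cᵇ f‖` for increasing `g ≥ 0` (proved by slicing `g` into its level
sets), bound `|B(t, ξ)|` by `2 / (|θ| (t/2) φ'(t/2))`, which is at most `2 c₀ c₁ / (|θ| φ(t))`.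
The bound `1/ρ` is the trivial estimate.
-/

open Real Set MeasureTheory

theorem IsUpperSet.inter_Ioc_ae_eq_Ioc {S : Set ℝ} (hS : IsUpperSet S) {a b : ℝ} (hab : a ≤ b) :
    ∃ c ∈ Icc a b, (S ∩ Ioc a b : Set ℝ) =ᵐ[volume] Ioc c b := by
  rcases (S ∩ Ioc a b).eq_empty_or_nonempty with hT | hT
  · exact ⟨b, ⟨hab, le_rfl⟩, by simp [hT]⟩
  have hbdd : BddBelow (S ∩ Ioc a b) := ⟨a, fun s hs => hs.2.1.le⟩
  obtain ⟨s₀, hs₀⟩ := hT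
  refine ⟨sInf (S ∩ Ioc a b), ⟨le_csInf ⟨s₀, hs₀⟩ fun s hs => hs.2.1.le,
    (csInf_le hbdd hs₀).trans hs₀.2.2⟩, Filter.EventuallyLE.antisymm ?_ ?_⟩
  · have hsub : S ∩ Ioc a b ⊆ Icc (sInf (S ∩ Ioc a b)) b :=
      fun s hs => ⟨csInf_le hbdd hs, hs.2.2⟩
    exact hsub.eventuallyLE.trans Ioc_ae_eq_Icc.symm.le
  · refine LE.le.eventuallyLE fun s hs => ?_
    obtain ⟨s', hs', hs's⟩ := exists_lt_of_csInf_lt ⟨s₀, hs₀⟩ hs.1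
    exact ⟨hS hs's.le hs'.1, hs'.2.1.trans hs's, hs.2⟩

section SecondMeanValue

variable {E : Type*} [NormedAddCommGroup E] [NormedSpace ℝ E] [CompleteSpace E]

theorem norm_setIntegral_Ioc_smul_le_of_monotone {f : ℝ → E} {g : ℝ → ℝ} {a b M : ℝ}
    (hab : a ≤ b) (hg : Monotone g) (hga : 0 ≤ g a) (hf : IntegrableOn f (Ioc a b))
    (hM : ∀ c ∈ Icc a b, ‖∫ s in Ioc c b, f s‖ ≤ M) :
    ‖∫ s in Ioc a b, g s • f s‖ ≤ g b * M := by
  have hG : 0 ≤ g b - g a := sub_nonneg.2 (hg hab)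
  let L : ℝ → Set ℝ := fun u => {s | g a + u < g s}
  have hL : MeasurableSet {p : ℝ × ℝ | p.1 ∈ L p.2} :=
    measurableSet_lt (measurable_const.add measurable_snd) (hg.measurable.comp measurable_fst)
  have hint : Integrable (Function.uncurry fun s u => (L u).indicator f s)
      ((volume.restrict (Ioc a b)).prod (volume.restrict (Ioo 0 (g b - g a)))) :=
    (hf.comp_fst _).indicator hL
  -- layer cake: `g s - g a` is the length of `{u ∈ (0, g b - g a) | s ∈ L u}`
  have hlayer : ∀ s ∈ Ioc a b,
      ∫ u in Ioo 0 (g b - g a), (L u).indicator f s = (g s - g a) • f s := by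
    intro s hs
    have hgs : 0 ≤ g s - g a := sub_nonneg.2 (hg hs.1.le)
    have hind : (fun u => (L u).indicator f s) = (Iio (g s - g a)).indicator fun _ => f s := by
      ext u
      simp only [L, indicator, mem_Iio, lt_sub_iff_add_lt']
      rfl
    rw [hind, setIntegral_indicator measurableSet_Iio, Ioo_inter_Iio,
      min_eq_right (by linarith [hg hs.2]), setIntegral_const, volume_real_Ioo_of_le hgs, sub_zero]
  have hlevel : ∀ u, ‖∫ s in Ioc a b, (L u).indicator f s‖ ≤ M := by
    intro u
    have hLu : IsUpperSet (L u) := fun s s' hss' hs => hs.trans_le (hg hss')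
    obtain ⟨c, hc, hae⟩ := hLu.inter_Ioc_ae_eq_Ioc hab
    rw [setIntegral_indicator (measurableSet_lt measurable_const hg.measurable), inter_comm,
      setIntegral_congr_set hae]
    exact hM c hc
  have hvar : ‖∫ s in Ioc a b, (g s - g a) • f s‖ ≤ M * (g b - g a) := by
    rw [← setIntegral_congr_fun measurableSet_Ioc hlayer, integral_integral_swap hint]
    exact (norm_setIntegral_le_of_norm_le_const measure_Ioo_lt_top fun u _ => hlevel u).trans_eq
      (by rw [volume_real_Ioo_of_le hG, sub_zero])
  have hvar_int : IntegrableOn (fun s => (g s - g a) • f s) (Ioc a b) :=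
    hint.integral_prod_left.congr ((ae_restrict_of_forall_mem measurableSet_Ioc hlayer))
  have hsplit : ∫ s in Ioc a b, g s • f s
      = g a • (∫ s in Ioc a b, f s) + ∫ s in Ioc a b, (g s - g a) • f s := by
    have hconst : IntegrableOn (fun s => g a • f s) (Ioc a b) := hf.smul (g a)
    rw [← integral_smul, ← integral_add hconst hvar_int]
    simp only [← add_smul, add_sub_cancel]
  calc ‖∫ s in Ioc a b, g s • f s‖
      ≤ g a * M + M * (g b - g a) := by
        rw [hsplit]
        refine (norm_add_le _ _).trans (add_le_add ?_ hvar)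
        rw [norm_smul, Real.norm_of_nonneg hga]
        exact mul_le_mul_of_nonneg_left (hM a ⟨le_rfl, hab⟩) hga
    _ = g b * M := by ring

theorem norm_intervalIntegral_smul_le_of_monotoneOn {f : ℝ → E} {g : ℝ → ℝ} {a b M : ℝ}
    (hab : a ≤ b) (hg : MonotoneOn g (Icc a b)) (hga : 0 ≤ g a)
    (hf : IntervalIntegrable f volume a b) (hM : ∀ c ∈ Icc a b, ‖∫ s in c..b, f s‖ ≤ M) :
    ‖∫ s in a..b, g s • f s‖ ≤ g b * M := by
  set g' := IccExtend hab fun s : Icc a b => g s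
  have hg' : Monotone g' := Monotone.IccExtend hab fun x y hxy => hg x.2 y.2 hxy
  have hg'_eq : ∀ s ∈ Icc a b, g' s = g s := fun s hs => IccExtend_of_mem hab _ hs
  have hcongr : ∫ s in Ioc a b, g s • f s = ∫ s in Ioc a b, g' s • f s :=
    setIntegral_congr_fun measurableSet_Ioc fun s hs => by rw [hg'_eq s (Ioc_subset_Icc_self hs)]
  rw [intervalIntegral.integral_of_le hab, hcongr, ← hg'_eq b ⟨hab, le_rfl⟩]
  refine norm_setIntegral_Ioc_smul_le_of_monotone hab hg' ?_ hf.1 fun c hc => ?_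
  · rwa [hg'_eq a ⟨le_rfl, hab⟩]
  · rw [← intervalIntegral.integral_of_le hc.2]
    exact hM c hc

theorem norm_intervalIntegral_smul_le_of_antitoneOn {f : ℝ → E} {g : ℝ → ℝ} {a b M : ℝ}
    (hab : a ≤ b) (hg : AntitoneOn g (Icc a b)) (hgb : 0 ≤ g b)
    (hf : IntervalIntegrable f volume a b) (hM : ∀ c ∈ Icc a b, ‖∫ s in a..c, f s‖ ≤ M) :
    ‖∫ s in a..b, g s • f s‖ ≤ g a * M := by
  have hg_neg : MonotoneOn (fun s => g (-s)) (Icc (-b) (-a)) := fun x hx y hy hxy =>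
    hg ⟨le_neg.2 hy.2, neg_le.2 hy.1⟩ ⟨le_neg.2 hx.2, neg_le.2 hx.1⟩ (neg_le_neg hxy)
  have hf_neg : IntervalIntegrable (fun s => f (-s)) volume (-b) (-a) :=
    ((IntervalIntegrable.iff_comp_neg (f := f)).1 hf).symm
  have hM_neg : ∀ c ∈ Icc (-b) (-a), ‖∫ s in c..-a, f (-s)‖ ≤ M := fun c hc => by
    simpa [intervalIntegral.integral_comp_neg f] using hM (-c) ⟨le_neg.2 hc.2, neg_le.2 hc.1⟩
  simpa [intervalIntegral.integral_comp_neg (fun s => g s • f s)] using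
    norm_intervalIntegral_smul_le_of_monotoneOn (neg_le_neg hab) hg_neg (by simpa using hgb)
      hf_neg hM_neg

end SecondMeanValue

section Oscillatory

open Complex

theorem norm_integral_deriv_smul_exp_le {φ φ' : ℝ → ℝ} {a b θ : ℝ} (hθ : θ ≠ 0)
    (hφ : ∀ x ∈ uIcc a b, HasDerivAt φ (φ' x) x) (hφ' : ContinuousOn φ' (uIcc a b)) :
    ‖∫ x in a..b, φ' x • exp (-I * ((φ x * θ : ℝ) : ℂ))‖ ≤ 2 / |θ| := by
  set F : ℝ → ℂ := fun x => I / θ * exp (-I * ((φ x * θ : ℝ) : ℂ))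
  have hF : ∀ x ∈ uIcc a b, HasDerivAt F (φ' x • exp (-I * ((φ x * θ : ℝ) : ℂ))) x := by
    intro x hx
    refine ((((hφ x hx).mul_const θ).ofReal_comp.const_mul (-I)).cexp.const_mul
      (I / θ)).congr_deriv ?_
    have hθ' : (θ : ℂ) ≠ 0 := ofReal_ne_zero.2 hθ
    rw [real_smul]
    push_cast
    field_simp
    ring_nf
    rw [I_sq]
    ring
  have hφc : ContinuousOn φ (uIcc a b) := fun x hx => (hφ x hx).continuousAt.continuousWithinAt
  have hint : IntervalIntegrable (fun x => φ' x • exp (-I * ((φ x * θ : ℝ) : ℂ))) volume a b :=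
    ContinuousOn.intervalIntegrable (by fun_prop)
  have hF_norm : ∀ x, ‖F x‖ = 1 / |θ| := fun x => by
    simp [F, norm_exp, Complex.norm_real]
  rw [intervalIntegral.integral_eq_sub_of_hasDerivAt hF hint]
  calc ‖F b - F a‖ ≤ ‖F b‖ + ‖F a‖ := norm_sub_le _ _
    _ = 2 / |θ| := by rw [hF_norm, hF_norm]; ring

theorem norm_integral_rpow_smul_exp_le_of_monotoneOn {φ φ' : ℝ → ℝ} {ρ a b θ : ℝ} (hρ : 0 ≤ ρ)
    (hθ : θ ≠ 0) (ha : 0 < a) (hab : a ≤ b) (hφ : ∀ x ∈ Icc a b, HasDerivAt φ (φ' x) x)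
    (hφ' : ContinuousOn φ' (Icc a b)) (hφ'_pos : ∀ x ∈ Icc a b, 0 < φ' x)
    (hmono : MonotoneOn (fun x => x * φ' x) (Icc a b)) :
    ‖∫ x in a..b, x ^ (ρ - 1) • exp (-I * ((φ x * θ : ℝ) : ℂ))‖ ≤
      2 * b ^ ρ / (a * φ' a * |θ|) := by
  set e : ℝ → ℂ := fun x => φ' x • exp (-I * ((φ x * θ : ℝ) : ℂ))
  set w : ℝ → ℝ := fun x => (x * φ' x)⁻¹
  have hx_pos : ∀ x ∈ Icc a b, 0 < x * φ' x :=
    fun x hx => mul_pos (ha.trans_le hx.1) (hφ'_pos x hx)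
  have hw : AntitoneOn w (Icc a b) :=
    fun x hx y hy hxy => inv_anti₀ (hx_pos x hx) (hmono hx hy hxy)
  have hφc : ContinuousOn φ (Icc a b) := fun x hx => (hφ x hx).continuousAt.continuousWithinAt
  have he : ContinuousOn e (Icc a b) := by fun_prop
  have hwc : ContinuousOn w (Icc a b) :=
    ContinuousOn.inv₀ (by fun_prop) fun x hx => (hx_pos x hx).ne'
  have hinner : ∀ c ∈ Icc a b, ‖∫ x in c..b, w x • e x‖ ≤ w a * (2 / |θ|) := by
    intro c hc
    have hsub : Icc c b ⊆ Icc a b := Icc_subset_Icc_left hc.1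
    refine (norm_intervalIntegral_smul_le_of_antitoneOn (M := 2 / |θ|) hc.2 (hw.mono hsub)
      (inv_nonneg.2 (hx_pos b ⟨hab, le_rfl⟩).le) ((he.mono hsub).intervalIntegrable_of_Icc hc.2)
      fun d hd => ?_).trans ?_
    · have hcd : uIcc c d ⊆ Icc a b := by
        rw [uIcc_of_le hd.1]
        exact Icc_subset_Icc hc.1 hd.2
      exact norm_integral_deriv_smul_exp_le hθ (fun x hx => hφ x (hcd hx)) (hφ'.mono hcd)
    · exact mul_le_mul_of_nonneg_right (hw ⟨le_rfl, hab⟩ hc hc.1) (by positivity)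
  have houter := norm_intervalIntegral_smul_le_of_monotoneOn hab
    (fun x hx y hy hxy => rpow_le_rpow (ha.le.trans hx.1) hxy hρ) (rpow_nonneg ha.le ρ)
    ((hwc.smul he).intervalIntegrable_of_Icc hab) hinner
  have hcongr : ∀ x ∈ uIcc a b,
      x ^ (ρ - 1) • exp (-I * ((φ x * θ : ℝ) : ℂ)) = x ^ ρ • (w x • e x) := by
    intro x hx
    rw [uIcc_of_le hab] at hx
    have hx0 : 0 < x := ha.trans_le hx.1
    have hφ'x : φ' x ≠ 0 := (hφ'_pos x hx).ne'
    simp only [w, e, smul_smul]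
    rw [rpow_sub_one hx0.ne']
    field_simp
  rw [intervalIntegral.integral_congr hcongr]
  refine houter.trans_eq ?_
  simp only [w]
  field_simp

theorem norm_integral_rpow_smul_exp_le {ψ : ℝ → ℝ} {ρ a b : ℝ} (hρ : 0 < ρ) (ha : 0 ≤ a)
    (hab : a ≤ b) :
    ‖∫ x in a..b, x ^ (ρ - 1) • exp (-I * (ψ x : ℂ))‖ ≤ (b ^ ρ - a ^ ρ) / ρ := by
  have hnorm : ∀ x ∈ Ioc a b, ‖x ^ (ρ - 1) • exp (-I * (ψ x : ℂ))‖ ≤ x ^ (ρ - 1) :=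
    fun x hx => by simp [norm_exp, abs_of_nonneg (rpow_nonneg (ha.trans hx.1.le) _)]
  calc ‖∫ x in a..b, x ^ (ρ - 1) • exp (-I * (ψ x : ℂ))‖ ≤ ∫ x in a..b, x ^ (ρ - 1) :=
        intervalIntegral.norm_integral_le_of_norm_le hab (ae_of_all _ hnorm)
          (intervalIntegral.intervalIntegrable_rpow' (by linarith))
    _ = (b ^ ρ - a ^ ρ) / ρ := by rw [integral_rpow (Or.inl (by linarith)), sub_add_cancel]

end Oscillatory

theorem le_mul_half_mul_deriv_half {φ φ' : ℝ → ℝ} {c₀ c₁ t : ℝ} (hc₀ : 0 ≤ c₀) (ht : 0 < t)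
    (hφ_le : ∀ t > 0, φ t ≤ c₁ * t * φ' t) (hφ_doubling : ∀ t > 0, φ (2 * t) ≤ c₀ * φ t) :
    φ t ≤ c₀ * c₁ * (t / 2 * φ' (t / 2)) := calc
  φ t = φ (2 * (t / 2)) := by ring_nf
  _ ≤ c₀ * (c₁ * (t / 2) * φ' (t / 2)) :=
    (hφ_doubling _ (half_pos ht)).trans (mul_le_mul_of_nonneg_left (hφ_le _ (half_pos ht)) hc₀)
  _ = c₀ * c₁ * (t / 2 * φ' (t / 2)) := by ring

theorem stmt15_general (n : ℕ) (ρ : ℝ) (hρ : 0 < ρ) :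
    ∃ C > 0, ∀ (φ φ' : ℝ → ℝ) (c₀ c₁ : ℝ), 1 < c₀ → 0 < c₁ →
      (∀ t > 0, 0 < φ t) →
      StrictMonoOn φ (Set.Ioi 0) →
      (∀ t > 0, HasDerivAt φ (φ' t) t) →
      ContinuousOn φ' (Set.Ioi 0) →
      MonotoneOn (fun t => t * φ' t) (Set.Ioi 0) →
      (∀ t > 0, φ t ≤ c₁ * t * φ' t) →
      (∀ t > 0, φ (2 * t) ≤ c₀ * φ t) →
      ∀ (y' ξ : EuclideanSpace ℝ (Fin n)), ‖y'‖ = 1 → inner ℝ y' ξ ≠ (0 : ℝ) →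
      ∀ t > 0,
        ‖(t ^ (-ρ) : ℝ) • ∫ r in Set.Ioc (t / 2) t,
            (r ^ (ρ - 1) : ℝ) • Complex.exp (-(Complex.I) * ((φ r * inner ℝ y' ξ : ℝ) : ℂ))‖ ≤
          C * c₀ * c₁ / (φ t * |inner ℝ y' ξ|) ∧
        ‖(t ^ (-ρ) : ℝ) • ∫ r in Set.Ioc (t / 2) t,
            (r ^ (ρ - 1) : ℝ) • Complex.exp (-(Complex.I) * ((φ r * inner ℝ y' ξ : ℝ) : ℂ))‖ ≤
          1 / ρ := by
  refine ⟨2, two_pos, ?_⟩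
  intro φ φ' c₀ c₁ hc₀ hc₁ hφ_pos _ hφ hφ' hmono hφ_le hφ_doubling y' ξ _ hθ t ht
  set θ : ℝ := inner ℝ y' ξ
  have ht2 : 0 < t / 2 := half_pos ht
  have hsub : Icc (t / 2) t ⊆ Ioi 0 := fun x hx => ht2.trans_le hx.1
  have hφ'_pos : ∀ r > 0, 0 < φ' r := fun r hr =>
    pos_of_mul_pos_right ((hφ_pos r hr).trans_le (hφ_le r hr)) (mul_pos hc₁ hr).le
  have hscale := le_mul_half_mul_deriv_half (by linarith) ht hφ_le hφ_doubling
  have htρ : t ^ (-ρ) * t ^ ρ = 1 := by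
    rw [rpow_neg ht.le, inv_mul_cancel₀ (rpow_pos_of_pos ht ρ).ne']
  rw [← intervalIntegral.integral_of_le (half_le_self ht.le), norm_smul,
    norm_of_nonneg (rpow_nonneg ht.le _)]
  constructor
  · calc _ ≤ t ^ (-ρ) * (2 * t ^ ρ / (t / 2 * φ' (t / 2) * |θ|)) :=
          mul_le_mul_of_nonneg_left (norm_integral_rpow_smul_exp_le_of_monotoneOn hρ.le hθ ht2
            (half_le_self ht.le) (fun x hx => hφ x (hsub hx)) (hφ'.mono hsub)
            (fun x hx => hφ'_pos x (hsub hx)) (hmono.mono hsub)) (by positivity)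
      _ = 2 / (t / 2 * φ' (t / 2) * |θ|) := by
          rw [← mul_div_assoc, mul_left_comm, htρ, mul_one]
      _ ≤ 2 * c₀ * c₁ / (φ t * |θ|) := by
          have := hφ_pos t ht
          have := hφ'_pos _ ht2
          rw [div_le_div_iff₀ (by positivity) (by positivity)]
          nlinarith [mul_le_mul_of_nonneg_right hscale (abs_nonneg θ)]
  · calc _ ≤ t ^ (-ρ) * ((t ^ ρ - (t / 2) ^ ρ) / ρ) :=
          mul_le_mul_of_nonneg_left (norm_integral_rpow_smul_exp_le hρ ht2.le
            (half_le_self ht.le)) (by positivity)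
      _ ≤ t ^ (-ρ) * (t ^ ρ / ρ) := by
          gcongr
          exact sub_le_self _ (rpow_nonneg ht2.le _)
      _ = 1 / ρ := by rw [← mul_div_assoc, htρ]

/-- Let `φ : (0,∞) → (0,∞)` be an increasing `C¹` function with `t ↦ t φ'(t)`
monotone increasing, `φ t ≤ c₁ t φ' t` and `φ(2t) ≤ c₀ φ t`. For a unit vector `y'` and `ξ`
with `⟪y', ξ⟫ ≠ 0`, set `B(t,ξ) = t^(−ρ) ∫_{t/2}^t e^{−i φ(r) ⟪y',ξ⟫} r^{ρ−1} dr`.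
Then `|B(t,ξ)| ≤ C c₀ c₁ / (φ t |⟪y',ξ⟫|)` with `C` depending only on `ρ`, and
`|B(t,ξ)| ≤ 1/ρ` always. -/
theorem stmt15 (n : ℕ) (hn : 2 ≤ n) (ρ : ℝ) (hρ : 0 < ρ) :
    ∃ C > 0, ∀ (φ φ' : ℝ → ℝ) (c₀ c₁ : ℝ), 1 < c₀ → 0 < c₁ →
      (∀ t > 0, 0 < φ t) →
      StrictMonoOn φ (Set.Ioi 0) →
      (∀ t > 0, HasDerivAt φ (φ' t) t) →
      ContinuousOn φ' (Set.Ioi 0) →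
      MonotoneOn (fun t => t * φ' t) (Set.Ioi 0) →
      (∀ t > 0, φ t ≤ c₁ * t * φ' t) →
      (∀ t > 0, φ (2 * t) ≤ c₀ * φ t) →
      ∀ (y' ξ : EuclideanSpace ℝ (Fin n)), ‖y'‖ = 1 → inner ℝ y' ξ ≠ (0 : ℝ) →
      ∀ t > 0,
        ‖(t ^ (-ρ) : ℝ) • ∫ r in Set.Ioc (t / 2) t,
            (r ^ (ρ - 1) : ℝ) • Complex.exp (-(Complex.I) * ((φ r * inner ℝ y' ξ : ℝ) : ℂ))‖ ≤
          C * c₀ * c₁ / (φ t * |inner ℝ y' ξ|) ∧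
        ‖(t ^ (-ρ) : ℝ) • ∫ r in Set.Ioc (t / 2) t,
            (r ^ (ρ - 1) : ℝ) • Complex.exp (-(Complex.I) * ((φ r * inner ℝ y' ξ : ℝ) : ℂ))‖ ≤
          1 / ρ :=
  stmt15_general n ρ hρ
end

section
/- Let Ω ∈ L log L(S^{n−1}) with ‖Ω‖_{L log L} = 1. Define Λ = {m ∈ ℕ : σ{2^{m−1} < |Ω| ≤ 2^m} > 2^{−4m}} ∪ {0}, and for m ∈ Λ∩ℕ set Ω_m = Ω·χ_{{2^{m−1}<|Ω|≤2^m}} − σ(S^{n−1})⁻¹ ∫_{2^{m−1}<|Ω|≤2^m} Ω dσ, and Ω₀ = Ω − Σ_{m∈Λ∩ℕ} Ω_m. Then: (a) ∫_{S^{n−1}} Ω_m dσ = 0 for all m ∈ Λ∩ℕ; (b) Ω = Σ_{m∈Λ} Ω_m; (c) ‖Ω₀‖_{L²(S^{n−1})} + Σ_{m∈Λ} m ‖Ω_m‖_{L¹(S^{n−1})} ≤ C ‖Ω‖_{L log L(S^{n−1})} for a dimensional constant C. -/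
open Real Set MeasureTheory Metric ENNReal NNReal
open scoped Classical

noncomputable section

/-- The unit sphere `S^{n-1} ⊂ ℝⁿ`. -/
abbrev unitSphere (n : ℕ) := Metric.sphere (0 : EuclideanSpace ℝ (Fin n)) 1

/-- The surface measure on the unit sphere. -/
def sphereMeasure (n : ℕ) : Measure (unitSphere n) :=
  (volume : Measure (EuclideanSpace ℝ (Fin n))).toSphere

/-!
Nothing here is specific to the sphere: the argument works on any finite measure space.
Writing `G` for the union of the selected level sets `E_m`, the pieces `Ω_m` sum pointwise to
`Ω χ_G` minus the mean of `Ω χ_G`, so `Ω₀ = Ω χ_{Gᶜ} + const`, the constant being bounded by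
`‖Ω‖₁ ≲ ‖Ω‖_{L log L}`. On `E_m` one has `m ≤ (2 / log 2) log (2 + |Ω|)`, which bounds
`Σ m ‖Ω_m‖₁` by the `L log L` norm. Off `G`, either `|Ω| ≤ 1` or `Ω` lies in a level set `E_m`
with `σ(E_m) ≤ 2^{-4m}`, on which `|Ω|² ≤ 4^m`; these contribute a geometric series to `‖Ω₀‖₂²`.
-/

open Function

theorem hasSum_indicator_iUnion {α ι M : Type*} [AddCommMonoid M] [TopologicalSpace M]
    {s : ι → Set α} (hs : Pairwise (Disjoint on s)) (f : α → M) (y : α) :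
    HasSum (fun i => (s i).indicator f y) ((⋃ i, s i).indicator f y) := by
  by_cases hy : y ∈ ⋃ i, s i
  · obtain ⟨j, hj⟩ := mem_iUnion.1 hy
    rw [indicator_of_mem hy, ← indicator_of_mem hj f]
    exact hasSum_single j fun i hij =>
      indicator_of_notMem (fun hi => (hs hij).ne_of_mem hi hj rfl) f
  · rw [indicator_of_notMem hy]
    simp only [mem_iUnion, not_exists] at hy
    simp only [indicator_of_notMem (hy _)]
    exact hasSum_zero

theorem hasSum_ite_zero_sub {M : Type*} [AddCommGroup M] [TopologicalSpace M]
    [IsTopologicalAddGroup M] {f : ℕ → M} {a : M} (hf : HasSum f a) (h0 : f 0 = 0) (b : M) :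
    HasSum (fun m => if m = 0 then b - a else f m) b := by
  have hupd : update f 0 (b - a) = fun m => if m = 0 then b - a else f m :=
    funext fun m => update_apply _ _ _ _
  simpa [hupd, h0] using hf.update 0 (b - a)

theorem ENNReal.rpow_le_add_one (x : ℝ≥0∞) {p : ℝ} (hp₀ : 0 ≤ p) (hp₁ : p ≤ 1) :
    x ^ p ≤ x + 1 := by
  rcases le_total x 1 with h | h
  · calc x ^ p ≤ 1 ^ p := ENNReal.rpow_le_rpow h hp₀
      _ = 1 := ENNReal.one_rpow _
      _ ≤ x + 1 := le_add_self
  · calc x ^ p ≤ x ^ (1 : ℝ) := ENNReal.rpow_le_rpow_of_exponent_le h hp₁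
      _ = x := ENNReal.rpow_one x
      _ ≤ x + 1 := le_self_add

section CenteredIndicator

variable {α : Type*} [MeasurableSpace α] {μ : Measure α}

def centeredIndicator (μ : Measure α) (f : α → ℝ) (s : Set α) (y : α) : ℝ :=
  s.indicator f y - ((μ univ).toReal)⁻¹ * ∫ z in s, f z ∂μ

@[simp]
theorem centeredIndicator_empty (f : α → ℝ) : centeredIndicator μ f ∅ = 0 := by
  ext y
  simp [centeredIndicator]

theorem integral_centeredIndicator [IsFiniteMeasure μ] {f : α → ℝ} {s : Set α}
    (hs : MeasurableSet s) (hf : IntegrableOn f s μ) :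
    ∫ y, centeredIndicator μ f s y ∂μ = 0 := by
  rcases eq_or_ne μ 0 with rfl | hμ
  · simp
  have ha : (μ univ).toReal ≠ 0 :=
    (ENNReal.toReal_pos (Measure.measure_univ_ne_zero.2 hμ) (measure_ne_top _ _)).ne'
  simp only [centeredIndicator]
  rw [integral_sub ((integrable_indicator_iff hs).2 hf) (integrable_const _),
    integral_indicator hs, integral_const, smul_eq_mul, measureReal_def]
  field_simp
  ring

theorem hasSum_centeredIndicator_iUnion {ι : Type*} [Countable ι] {f : α → ℝ}
    {s : ι → Set α} (hs : ∀ i, MeasurableSet (s i)) (hd : Pairwise (Disjoint on s))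
    (hf : IntegrableOn f (⋃ i, s i) μ) (y : α) :
    HasSum (fun i => centeredIndicator μ f (s i) y) (centeredIndicator μ f (⋃ i, s i) y) :=
  (hasSum_indicator_iUnion hd f y).sub ((hasSum_integral_iUnion hs hd hf).mul_left _)

theorem sub_centeredIndicator (f : α → ℝ) (s : Set α) (y : α) :
    f y - centeredIndicator μ f s y =
      sᶜ.indicator f y + ((μ univ).toReal)⁻¹ * ∫ z in s, f z ∂μ := by
  rw [centeredIndicator, indicator_compl, Pi.sub_apply]
  ring

theorem ofReal_abs_mean_mul_measure_univ_le [IsFiniteMeasure μ] (f : α → ℝ) (s : Set α) :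
    ENNReal.ofReal |((μ univ).toReal)⁻¹ * ∫ z in s, f z ∂μ| * μ univ ≤
      ∫⁻ y in s, ENNReal.ofReal |f y| ∂μ := by
  have hle : |((μ univ).toReal)⁻¹ * ∫ z in s, f z ∂μ| * (μ univ).toReal ≤
      |∫ z in s, f z ∂μ| := by
    rw [abs_mul, abs_inv, abs_of_nonneg toReal_nonneg, mul_comm, ← mul_assoc]
    exact mul_le_of_le_one_left (abs_nonneg _) mul_inv_le_one
  calc ENNReal.ofReal |((μ univ).toReal)⁻¹ * ∫ z in s, f z ∂μ| * μ univ
      = ENNReal.ofReal (|((μ univ).toReal)⁻¹ * ∫ z in s, f z ∂μ| * (μ univ).toReal) := by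
        rw [ENNReal.ofReal_mul (abs_nonneg _), ofReal_toReal (measure_ne_top _ _)]
    _ ≤ ‖∫ z in s, f z ∂μ‖ₑ := by
        rw [Real.enorm_eq_ofReal_abs]
        exact ENNReal.ofReal_le_ofReal hle
    _ ≤ ∫⁻ y in s, ‖f y‖ₑ ∂μ := enorm_integral_le_lintegral_enorm _
    _ = ∫⁻ y in s, ENNReal.ofReal |f y| ∂μ := by simp only [Real.enorm_eq_ofReal_abs]

theorem lintegral_abs_centeredIndicator_le [IsFiniteMeasure μ] (f : α → ℝ) (s : Set α) :
    ∫⁻ y, ENNReal.ofReal |centeredIndicator μ f s y| ∂μ ≤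
      2 * ∫⁻ y in s, ENNReal.ofReal |f y| ∂μ := by
  set c := ((μ univ).toReal)⁻¹ * ∫ z in s, f z ∂μ
  have hpt : ∀ y, ENNReal.ofReal |centeredIndicator μ f s y| ≤
      s.indicator (fun z => ENNReal.ofReal |f z|) y + ENNReal.ofReal |c| := fun y =>
    calc ENNReal.ofReal |s.indicator f y - c|
        ≤ ENNReal.ofReal (|s.indicator f y| + |c|) := ENNReal.ofReal_le_ofReal (abs_sub _ _)
      _ ≤ ENNReal.ofReal |s.indicator f y| + ENNReal.ofReal |c| := ENNReal.ofReal_add_le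
      _ = s.indicator (fun z => ENNReal.ofReal |f z|) y + ENNReal.ofReal |c| := by
        by_cases hy : y ∈ s <;> simp [hy]
  calc ∫⁻ y, ENNReal.ofReal |centeredIndicator μ f s y| ∂μ
      ≤ ∫⁻ y, (s.indicator (fun z => ENNReal.ofReal |f z|) y + ENNReal.ofReal |c|) ∂μ :=
        lintegral_mono hpt
    _ = ∫⁻ y, s.indicator (fun z => ENNReal.ofReal |f z|) y ∂μ + ENNReal.ofReal |c| * μ univ := by
        rw [lintegral_add_right _ measurable_const, lintegral_const]
    _ ≤ ∫⁻ y in s, ENNReal.ofReal |f y| ∂μ + ∫⁻ y in s, ENNReal.ofReal |f y| ∂μ :=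
        add_le_add (lintegral_indicator_le _ _) (ofReal_abs_mean_mul_measure_univ_le f s)
    _ = 2 * ∫⁻ y in s, ENNReal.ofReal |f y| ∂μ := (two_mul _).symm

theorem lintegral_sq_indicator_add_const_le {F : Set α} (hF : MeasurableSet F) (f : α → ℝ)
    (c : ℝ) :
    ∫⁻ y, ENNReal.ofReal ((F.indicator f y + c) ^ 2) ∂μ ≤
      2 * ∫⁻ y in F, ENNReal.ofReal (f y ^ 2) ∂μ + ENNReal.ofReal (2 * c ^ 2) * μ univ := by
  have hpt : ∀ y, ENNReal.ofReal ((F.indicator f y + c) ^ 2) ≤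
      2 * F.indicator (fun z => ENNReal.ofReal (f z ^ 2)) y + ENNReal.ofReal (2 * c ^ 2) :=
    fun y =>
    calc ENNReal.ofReal ((F.indicator f y + c) ^ 2)
        ≤ ENNReal.ofReal (2 * F.indicator f y ^ 2 + 2 * c ^ 2) :=
          ENNReal.ofReal_le_ofReal (by nlinarith [sq_nonneg (F.indicator f y - c)])
      _ ≤ ENNReal.ofReal (2 * F.indicator f y ^ 2) + ENNReal.ofReal (2 * c ^ 2) :=
          ENNReal.ofReal_add_le
      _ = _ := by
          by_cases hy : y ∈ F <;> simp [hy, ENNReal.ofReal_mul]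
  calc ∫⁻ y, ENNReal.ofReal ((F.indicator f y + c) ^ 2) ∂μ
      ≤ ∫⁻ y, (2 * F.indicator (fun z => ENNReal.ofReal (f z ^ 2)) y +
          ENNReal.ofReal (2 * c ^ 2)) ∂μ := lintegral_mono hpt
    _ = _ := by
        rw [lintegral_add_right _ measurable_const, lintegral_const,
          lintegral_const_mul' _ _ ofNat_ne_top, lintegral_indicator hF]

end CenteredIndicator

section LLogL

variable {α : Type*} [MeasurableSpace α] {μ : Measure α} {Ω : α → ℝ}

theorem log_two_mul_abs_le (t : ℝ) : Real.log 2 * |t| ≤ |t| * Real.log (2 + |t|) := by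
  rw [mul_comm]
  exact mul_le_mul_of_nonneg_left (log_le_log two_pos (by linarith [abs_nonneg t]))
    (abs_nonneg t)

theorem integrable_of_integrable_abs_mul_log (hΩ : AEStronglyMeasurable Ω μ)
    (h : Integrable (fun y => |Ω y| * Real.log (2 + |Ω y|)) μ) : Integrable Ω μ :=
  (h.const_mul (Real.log 2)⁻¹).mono' hΩ <| ae_of_all _ fun y => by
    rw [Real.norm_eq_abs, le_inv_mul_iff₀ (log_pos one_lt_two)]
    exact log_two_mul_abs_le _

theorem integral_abs_le_of_integrable_abs_mul_log (hΩ : Integrable Ω μ)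
    (h : Integrable (fun y => |Ω y| * Real.log (2 + |Ω y|)) μ) :
    ∫ y, |Ω y| ∂μ ≤ (Real.log 2)⁻¹ * ∫ y, |Ω y| * Real.log (2 + |Ω y|) ∂μ := by
  rw [le_inv_mul_iff₀ (log_pos one_lt_two), ← integral_const_mul]
  exact integral_mono (hΩ.abs.const_mul _) h fun y => log_two_mul_abs_le _

end LLogL

section DyadicLevelSets

variable {α : Type*} (Ω : α → ℝ)

def dyadicLevelSet (m : ℕ) : Set α :=
  {y | (2 : ℝ) ^ (m - 1 : ℤ) < |Ω y| ∧ |Ω y| ≤ (2 : ℝ) ^ (m : ℤ)}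

variable {Ω}

theorem measurableSet_dyadicLevelSet [MeasurableSpace α] (hΩ : Measurable Ω) (m : ℕ) :
    MeasurableSet (dyadicLevelSet Ω m) :=
  hΩ.abs measurableSet_Ioc

variable (Ω) in
theorem pairwise_disjoint_dyadicLevelSet : Pairwise (Disjoint on dyadicLevelSet Ω) := by
  refine (pairwise_disjoint_on _).2 fun i j hij => disjoint_left.2 fun y hi hj => ?_
  have : (2 : ℝ) ^ (i : ℤ) ≤ (2 : ℝ) ^ (j - 1 : ℤ) := zpow_le_zpow_right₀ one_le_two (by omega)
  exact (hi.2.trans this).not_gt hj.1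

theorem exists_mem_dyadicLevelSet_succ {y : α} (hy : 1 < |Ω y|) :
    ∃ m : ℕ, y ∈ dyadicLevelSet Ω (m + 1) := by
  obtain ⟨k, hk₁, hk₂⟩ := exists_mem_Ioc_zpow (zero_lt_one.trans hy) one_lt_two
  have hk : 0 ≤ k := by
    by_contra! hk
    linarith [zpow_le_one_of_nonpos₀ (one_le_two (α := ℝ)) (by omega : k + 1 ≤ 0)]
  lift k to ℕ using hk
  exact ⟨k, by simpa using hk₁, by simpa using hk₂⟩

theorem natCast_mul_abs_le_of_mem_dyadicLevelSet {m : ℕ} {y : α}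
    (hy : y ∈ dyadicLevelSet Ω m) :
    (m : ℝ) * |Ω y| ≤ 2 / Real.log 2 * (|Ω y| * Real.log (2 + |Ω y|)) := by
  have h₁ : Real.log 2 ≤ Real.log (2 + |Ω y|) :=
    log_le_log two_pos (by linarith [abs_nonneg (Ω y)])
  have h₂ : ((m : ℝ) - 1) * Real.log 2 ≤ Real.log (2 + |Ω y|) := by
    have := log_le_log (zpow_pos two_pos _) (hy.1.trans (by linarith : |Ω y| < 2 + |Ω y|)).le
    rwa [Real.log_zpow, Int.cast_sub, Int.cast_natCast, Int.cast_one] at this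
  rw [div_mul_eq_mul_div, le_div_iff₀ (log_pos one_lt_two)]
  nlinarith [abs_nonneg (Ω y)]

theorem sq_le_of_mem_dyadicLevelSet {m : ℕ} {y : α} (hy : y ∈ dyadicLevelSet Ω m) :
    Ω y ^ 2 ≤ 4 ^ m := by
  have := hy.2
  rw [zpow_natCast] at this
  calc Ω y ^ 2 = |Ω y| ^ 2 := (sq_abs _).symm
    _ ≤ ((2 : ℝ) ^ m) ^ 2 := pow_le_pow_left₀ (abs_nonneg _) this 2
    _ = 4 ^ m := by rw [← pow_mul, mul_comm, pow_mul]; norm_num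

end DyadicLevelSets

section LevelSetIntegrals

variable {α : Type*} [MeasurableSpace α] {μ : Measure α} {Ω : α → ℝ}

theorem setLIntegral_sq_dyadicLevelSet_le {m : ℕ}
    (hm : μ (dyadicLevelSet Ω m) ≤ ENNReal.ofReal ((2 : ℝ) ^ (-(4 * (m : ℤ))))) :
    ∫⁻ y in dyadicLevelSet Ω m, ENNReal.ofReal (Ω y ^ 2) ∂μ ≤ 2⁻¹ ^ m := by
  have hpow : (4 : ℝ) ^ m * (2 : ℝ) ^ (-(4 * (m : ℤ))) ≤ 2⁻¹ ^ m := by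
    rw [zpow_neg, zpow_mul, zpow_natCast, ← inv_pow, ← mul_pow]
    exact pow_le_pow_left₀ (by norm_num) (by norm_num) m
  calc ∫⁻ y in dyadicLevelSet Ω m, ENNReal.ofReal (Ω y ^ 2) ∂μ
      ≤ ∫⁻ _ in dyadicLevelSet Ω m, ENNReal.ofReal (4 ^ m) ∂μ :=
        setLIntegral_mono measurable_const fun y hy =>
          ENNReal.ofReal_le_ofReal (sq_le_of_mem_dyadicLevelSet hy)
    _ = ENNReal.ofReal (4 ^ m) * μ (dyadicLevelSet Ω m) := setLIntegral_const _ _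
    _ ≤ ENNReal.ofReal (4 ^ m) * ENNReal.ofReal ((2 : ℝ) ^ (-(4 * (m : ℤ)))) := by gcongr
    _ ≤ ENNReal.ofReal (2⁻¹ ^ m) := by
        rw [← ENNReal.ofReal_mul (by positivity)]
        exact ENNReal.ofReal_le_ofReal hpow
    _ = 2⁻¹ ^ m := by
        rw [ENNReal.ofReal_pow (by norm_num), ENNReal.ofReal_inv_of_pos two_pos, ofReal_ofNat]

theorem setLIntegral_sq_le_of_disjoint_dyadicLevelSet {F : Set α}
    (hF : ∀ m : ℕ, 1 ≤ m → ENNReal.ofReal ((2 : ℝ) ^ (-(4 * (m : ℤ)))) < μ (dyadicLevelSet Ω m) →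
      Disjoint F (dyadicLevelSet Ω m)) :
    ∫⁻ y in F, ENNReal.ofReal (Ω y ^ 2) ∂μ ≤ μ univ + 2 := by
  have hcover : F ⊆ {y | |Ω y| ≤ 1} ∪ ⋃ m, F ∩ dyadicLevelSet Ω (m + 1) := by
    intro y hy
    by_cases h : |Ω y| ≤ 1
    · exact Or.inl h
    · obtain ⟨m, hm⟩ := exists_mem_dyadicLevelSet_succ (not_le.1 h)
      exact Or.inr (mem_iUnion.2 ⟨m, hy, hm⟩)
  have hsmall : ∫⁻ y in {y | |Ω y| ≤ 1}, ENNReal.ofReal (Ω y ^ 2) ∂μ ≤ μ univ :=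
    calc ∫⁻ y in {y | |Ω y| ≤ 1}, ENNReal.ofReal (Ω y ^ 2) ∂μ
        ≤ ∫⁻ _ in {y | |Ω y| ≤ 1}, 1 ∂μ :=
          setLIntegral_mono measurable_const fun y hy => ENNReal.ofReal_le_one.2 <| by
            rw [← sq_abs]
            exact pow_le_one₀ (abs_nonneg _) hy
      _ ≤ μ univ := by
          rw [setLIntegral_one]
          exact measure_mono (subset_univ _)
  have hlevel : ∀ m : ℕ,
      ∫⁻ y in F ∩ dyadicLevelSet Ω (m + 1), ENNReal.ofReal (Ω y ^ 2) ∂μ ≤ 2⁻¹ ^ m := by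
    intro m
    by_cases h : ENNReal.ofReal ((2 : ℝ) ^ (-(4 * ((m + 1 : ℕ) : ℤ)))) <
        μ (dyadicLevelSet Ω (m + 1))
    · rw [(hF (m + 1) (by omega) h).inter_eq, Measure.restrict_empty, lintegral_zero_measure]
      exact zero_le
    · calc ∫⁻ y in F ∩ dyadicLevelSet Ω (m + 1), ENNReal.ofReal (Ω y ^ 2) ∂μ
          ≤ ∫⁻ y in dyadicLevelSet Ω (m + 1), ENNReal.ofReal (Ω y ^ 2) ∂μ :=
            lintegral_mono_set inter_subset_right
        _ ≤ 2⁻¹ ^ (m + 1) := setLIntegral_sq_dyadicLevelSet_le (not_lt.1 h)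
        _ ≤ 2⁻¹ ^ m := pow_le_pow_of_le_one zero_le (by norm_num) m.le_succ
  calc ∫⁻ y in F, ENNReal.ofReal (Ω y ^ 2) ∂μ
      ≤ ∫⁻ y in {y | |Ω y| ≤ 1} ∪ ⋃ m, F ∩ dyadicLevelSet Ω (m + 1), ENNReal.ofReal (Ω y ^ 2) ∂μ :=
        lintegral_mono_set hcover
    _ ≤ ∫⁻ y in {y | |Ω y| ≤ 1}, ENNReal.ofReal (Ω y ^ 2) ∂μ +
          ∫⁻ y in ⋃ m, F ∩ dyadicLevelSet Ω (m + 1), ENNReal.ofReal (Ω y ^ 2) ∂μ :=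
        lintegral_union_le _ _ _
    _ ≤ μ univ + ∑' m : ℕ, 2⁻¹ ^ m :=
        add_le_add hsmall ((lintegral_iUnion_le _ _).trans (ENNReal.tsum_le_tsum hlevel))
    _ = μ univ + 2 := by rw [ENNReal.tsum_geometric, ENNReal.one_sub_inv_two, inv_inv]

theorem tsum_mul_setLIntegral_dyadicLevelSet_le (hΩ : Measurable Ω) :
    ∑' m : ℕ, (m : ℝ≥0∞) * ∫⁻ y in dyadicLevelSet Ω m, ENNReal.ofReal |Ω y| ∂μ ≤
      ENNReal.ofReal (2 / Real.log 2) *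
        ∫⁻ y, ENNReal.ofReal (|Ω y| * Real.log (2 + |Ω y|)) ∂μ := by
  set Φ : α → ℝ≥0∞ := fun y => ENNReal.ofReal (2 / Real.log 2) *
    ENNReal.ofReal (|Ω y| * Real.log (2 + |Ω y|))
  have hlevel : ∀ m : ℕ, (m : ℝ≥0∞) * ∫⁻ y in dyadicLevelSet Ω m, ENNReal.ofReal |Ω y| ∂μ ≤
      ∫⁻ y in dyadicLevelSet Ω m, Φ y ∂μ := fun m => by
    rw [← lintegral_const_mul' _ _ (natCast_ne_top m)]
    refine setLIntegral_mono' (measurableSet_dyadicLevelSet hΩ m) fun y hy => ?_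
    simp only [Φ]
    rw [← ENNReal.ofReal_natCast, ← ENNReal.ofReal_mul (Nat.cast_nonneg m),
      ← ENNReal.ofReal_mul (div_pos two_pos (log_pos one_lt_two)).le]
    exact ENNReal.ofReal_le_ofReal (natCast_mul_abs_le_of_mem_dyadicLevelSet hy)
  calc ∑' m : ℕ, (m : ℝ≥0∞) * ∫⁻ y in dyadicLevelSet Ω m, ENNReal.ofReal |Ω y| ∂μ
      ≤ ∑' m, ∫⁻ y in dyadicLevelSet Ω m, Φ y ∂μ := ENNReal.tsum_le_tsum hlevel
    _ = ∫⁻ y in ⋃ m, dyadicLevelSet Ω m, Φ y ∂μ :=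
        (lintegral_iUnion (measurableSet_dyadicLevelSet hΩ)
          (pairwise_disjoint_dyadicLevelSet Ω) _).symm
    _ ≤ ∫⁻ y, Φ y ∂μ := setLIntegral_le_lintegral _ _
    _ = _ := lintegral_const_mul' _ _ ofReal_ne_top

end LevelSetIntegrals

section Decomposition

variable {α : Type*} [MeasurableSpace α] {μ : Measure α} {Ω : α → ℝ}

theorem tsum_mul_lintegral_centeredIndicator_le [IsFiniteMeasure μ] (hΩ : Measurable Ω)
    {s : ℕ → Set α} (hs : ∀ m, s m ⊆ dyadicLevelSet Ω m) :
    ∑' m : ℕ, (m : ℝ≥0∞) * ∫⁻ y, ENNReal.ofReal |centeredIndicator μ Ω (s m) y| ∂μ ≤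
      ENNReal.ofReal (4 / Real.log 2) *
        ∫⁻ y, ENNReal.ofReal (|Ω y| * Real.log (2 + |Ω y|)) ∂μ :=
  calc ∑' m : ℕ, (m : ℝ≥0∞) * ∫⁻ y, ENNReal.ofReal |centeredIndicator μ Ω (s m) y| ∂μ
      ≤ ∑' m : ℕ, 2 * ((m : ℝ≥0∞) * ∫⁻ y in dyadicLevelSet Ω m, ENNReal.ofReal |Ω y| ∂μ) :=
        ENNReal.tsum_le_tsum fun m => by
          rw [mul_left_comm]
          gcongr
          exact (lintegral_abs_centeredIndicator_le Ω (s m)).trans (by gcongr; exact hs m)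
    _ = 2 * ∑' m : ℕ, (m : ℝ≥0∞) * ∫⁻ y in dyadicLevelSet Ω m, ENNReal.ofReal |Ω y| ∂μ :=
        ENNReal.tsum_mul_left
    _ ≤ 2 * (ENNReal.ofReal (2 / Real.log 2) *
          ∫⁻ y, ENNReal.ofReal (|Ω y| * Real.log (2 + |Ω y|)) ∂μ) := by
        gcongr
        exact tsum_mul_setLIntegral_dyadicLevelSet_le hΩ
    _ = _ := by
        rw [← mul_assoc, ← ofReal_ofNat 2, ← ENNReal.ofReal_mul zero_le_two]
        ring_nf

theorem hasSum_centeredIndicator_of_subset_dyadicLevelSet (hΩ : Integrable Ω μ)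
    {s : ℕ → Set α} (hs : ∀ m, MeasurableSet (s m)) (hsE : ∀ m, s m ⊆ dyadicLevelSet Ω m)
    (y : α) :
    HasSum (fun m => centeredIndicator μ Ω (s m) y) (centeredIndicator μ Ω (⋃ m, s m) y) :=
  hasSum_centeredIndicator_iUnion hs
    ((pairwise_disjoint_dyadicLevelSet Ω).mono fun i j h => h.mono (hsE i) (hsE j))
    hΩ.integrableOn y

theorem lintegral_sq_sub_centeredIndicator_le (hΩ : Measurable Ω)
    (hΦ : Integrable (fun y => |Ω y| * Real.log (2 + |Ω y|)) μ) {G : Set α}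
    (hG : MeasurableSet G)
    (hlarge : ∀ m : ℕ, 1 ≤ m →
      ENNReal.ofReal ((2 : ℝ) ^ (-(4 * (m : ℤ)))) < μ (dyadicLevelSet Ω m) →
        dyadicLevelSet Ω m ⊆ G) :
    ∫⁻ y, ENNReal.ofReal ((Ω y - centeredIndicator μ Ω G y) ^ 2) ∂μ ≤
      2 * (μ univ + 2) + ENNReal.ofReal (2 * ((μ univ).toReal⁻¹ *
        ((Real.log 2)⁻¹ * ∫ y, |Ω y| * Real.log (2 + |Ω y|) ∂μ)) ^ 2) * μ univ := by
  have hΩi := integrable_of_integrable_abs_mul_log hΩ.aestronglyMeasurable hΦ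
  have hmean : |(μ univ).toReal⁻¹ * ∫ z in G, Ω z ∂μ| ≤
      (μ univ).toReal⁻¹ * ((Real.log 2)⁻¹ * ∫ y, |Ω y| * Real.log (2 + |Ω y|) ∂μ) := by
    rw [abs_mul, abs_of_nonneg (inv_nonneg.2 toReal_nonneg)]
    gcongr
    exact abs_integral_le_integral_abs.trans <|
      (setIntegral_le_integral hΩi.abs (ae_of_all _ fun _ => abs_nonneg _)).trans
        (integral_abs_le_of_integrable_abs_mul_log hΩi hΦ)
  simp only [sub_centeredIndicator]
  refine (lintegral_sq_indicator_add_const_le hG.compl Ω _).trans ?_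
  gcongr 2 * ?_ + ENNReal.ofReal (2 * ?_) * _
  · exact setLIntegral_sq_le_of_disjoint_dyadicLevelSet fun m hm h =>
      disjoint_compl_left.mono_right (hlarge m hm h)
  · exact sq_le_sq' (abs_le.1 hmean).1 (abs_le.1 hmean).2

theorem rpow_lintegral_sq_add_tsum_mul_lintegral_le [IsFiniteMeasure μ] (hΩ : Measurable Ω)
    (hΦ : Integrable (fun y => |Ω y| * Real.log (2 + |Ω y|)) μ) {s : ℕ → Set α}
    (hs : ∀ m, MeasurableSet (s m)) (hsE : ∀ m, s m ⊆ dyadicLevelSet Ω m)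
    (hlarge : ∀ m : ℕ, 1 ≤ m →
      ENNReal.ofReal ((2 : ℝ) ^ (-(4 * (m : ℤ)))) < μ (dyadicLevelSet Ω m) →
        dyadicLevelSet Ω m ⊆ s m) :
    (∫⁻ y, ENNReal.ofReal ((Ω y - centeredIndicator μ Ω (⋃ m, s m) y) ^ 2) ∂μ) ^ (1 / (2 : ℝ)) +
        ∑' m : ℕ, (m : ℝ≥0∞) * ∫⁻ y, ENNReal.ofReal |centeredIndicator μ Ω (s m) y| ∂μ ≤
      2 * (μ univ + 2) + ENNReal.ofReal (2 * ((μ univ).toReal⁻¹ *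
        ((Real.log 2)⁻¹ * ∫ y, |Ω y| * Real.log (2 + |Ω y|) ∂μ)) ^ 2) * μ univ + 1 +
      ENNReal.ofReal (4 / Real.log 2) *
        ENNReal.ofReal (∫ y, |Ω y| * Real.log (2 + |Ω y|) ∂μ) := by
  have hL2 := lintegral_sq_sub_centeredIndicator_le hΩ hΦ (MeasurableSet.iUnion hs)
    fun m hm h => (hlarge m hm h).trans (subset_iUnion s m)
  rw [ofReal_integral_eq_lintegral_ofReal hΦ (ae_of_all _ fun y =>
    mul_nonneg (abs_nonneg _) (log_nonneg (by linarith [abs_nonneg (Ω y)])))]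
  exact add_le_add ((ENNReal.rpow_le_add_one _ (by norm_num) (by norm_num)).trans (by gcongr))
    (tsum_mul_lintegral_centeredIndicator_le hΩ hsE)

end Decomposition

instance (n : ℕ) : IsFiniteMeasure (sphereMeasure n) := by
  unfold sphereMeasure
  infer_instance

theorem stmt17_general (n : ℕ) :
    ∃ C : ℝ≥0, 0 < C ∧
    ∀ Ω : unitSphere n → ℝ, Measurable Ω →
    Integrable (fun y => |Ω y| * Real.log (2 + |Ω y|)) (sphereMeasure n) →
    (∫ y, |Ω y| * Real.log (2 + |Ω y|) ∂(sphereMeasure n)) = 1 →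
    ∀ E : ℕ → Set (unitSphere n),
      (∀ m, E m = {y | (2 : ℝ) ^ (m - 1 : ℤ) < |Ω y| ∧ |Ω y| ≤ (2 : ℝ) ^ (m : ℤ)}) →
    ∀ Λ : Set ℕ,
      Λ = {0} ∪ {m : ℕ | 1 ≤ m ∧
        ENNReal.ofReal ((2 : ℝ) ^ (-(4 * (m : ℤ)))) < sphereMeasure n (E m)} →
    ∀ g : ℕ → unitSphere n → ℝ,
      (∀ m, g m = if m ∈ Λ ∧ m ≠ 0 then
          (fun y => Set.indicator (E m) Ω y -
            ((sphereMeasure n Set.univ).toReal)⁻¹ * ∫ z in E m, Ω z ∂(sphereMeasure n))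
        else 0) →
    ∀ Ω₀ : unitSphere n → ℝ,
      (∀ y, Ω₀ y = Ω y - ∑' m, g m y) →
    ((∀ m ∈ Λ, m ≠ 0 → ∫ y, g m y ∂(sphereMeasure n) = 0) ∧
     (∀ y, HasSum (fun m : ℕ => if m = 0 then Ω₀ y else g m y) (Ω y)) ∧
     ((∫⁻ y, ENNReal.ofReal ((Ω₀ y) ^ 2) ∂(sphereMeasure n)) ^ (1 / (2 : ℝ)) +
        ∑' m : ℕ, (m : ℝ≥0∞) * ∫⁻ y, ENNReal.ofReal |g m y| ∂(sphereMeasure n) ≤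
        (C : ℝ≥0∞))) := by
  set σ := sphereMeasure n
  set K : ℝ≥0∞ := 2 * (σ univ + 2) +
    ENNReal.ofReal (2 * ((σ univ).toReal⁻¹ * (Real.log 2)⁻¹) ^ 2) * σ univ + 1 +
    ENNReal.ofReal (4 / Real.log 2)
  have hK : K ≠ ⊤ := by finiteness
  refine ⟨K.toNNReal, ENNReal.toNNReal_pos (by positivity) hK, ?_⟩
  intro Ω hΩ hΦ hnorm E hE Λ hΛ g hg Ω₀ hΩ₀
  obtain rfl : E = dyadicLevelSet Ω := funext hE
  have hΩi := integrable_of_integrable_abs_mul_log hΩ.aestronglyMeasurable hΦ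
  -- Unselected levels get the empty set, so that every `g m` is a centered indicator.
  set s : ℕ → Set (unitSphere n) := fun m => if m ∈ Λ ∧ m ≠ 0 then dyadicLevelSet Ω m else ∅
  have hsE : ∀ m, s m ⊆ dyadicLevelSet Ω m := fun m => by
    simp only [s]; split_ifs; exacts [subset_rfl, empty_subset _]
  have hs : ∀ m, MeasurableSet (s m) := fun m => by
    simp only [s]; split_ifs; exacts [measurableSet_dyadicLevelSet hΩ m, .empty]
  have hgs : ∀ m, g m = centeredIndicator σ Ω (s m) := fun m => by
    rw [hg m]; simp only [s]; split_ifs; exacts [rfl, (centeredIndicator_empty Ω).symm]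
  have hsum (y) : HasSum (fun m => g m y) (centeredIndicator σ Ω (⋃ m, s m) y) := by
    simpa only [hgs] using hasSum_centeredIndicator_of_subset_dyadicLevelSet hΩi hs hsE y
  have hΩ₀' (y) : Ω₀ y = Ω y - centeredIndicator σ Ω (⋃ m, s m) y := by
    rw [hΩ₀, (hsum y).tsum_eq]
  refine ⟨fun m hm hm0 => ?_, fun y => ?_, ?_⟩
  · rw [hgs, show s m = dyadicLevelSet Ω m from if_pos ⟨hm, hm0⟩]
    exact integral_centeredIndicator (measurableSet_dyadicLevelSet hΩ m) hΩi.integrableOn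
  · rw [hΩ₀']
    exact hasSum_ite_zero_sub (hsum y) (by simp [hgs, s]) (Ω y)
  · simp only [hΩ₀', hgs, ENNReal.coe_toNNReal hK]
    simpa only [hnorm, mul_one, ofReal_one] using
      rpow_lintegral_sq_add_tsum_mul_lintegral_le hΩ hΦ hs hsE fun m hm h =>
        (show s m = dyadicLevelSet Ω m from if_pos ⟨hΛ ▸ Or.inr ⟨hm, h⟩, by omega⟩).symm.subset

/-- the `L log L` decomposition of `Ω` on the sphere. With
`Λ = {0} ∪ {m ≥ 1 : σ{2^{m−1} < |Ω| ≤ 2^m} > 2^{−4m}}`,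
`Ω_m = Ω χ_{E_m} − σ(S^{n−1})⁻¹ ∫_{E_m} Ω dσ` for `m ∈ Λ ∩ ℕ_{≥1}` (and `Ω_m = 0` otherwise),
and `Ω₀ = Ω − Σ_m Ω_m`, one has: (a) each `Ω_m` has vanishing mean; (b) `Ω = Σ_{m∈Λ} Ω_m`
(with `Ω₀` as the `m = 0` term); (c) `‖Ω₀‖_{L²} + Σ_m m ‖Ω_m‖_{L¹} ≤ C ‖Ω‖_{L log L} = C`. -/
theorem stmt17 (n : ℕ) (hn : 2 ≤ n) :
    ∃ C : ℝ≥0, 0 < C ∧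
    ∀ Ω : unitSphere n → ℝ, Measurable Ω →
    Integrable (fun y => |Ω y| * Real.log (2 + |Ω y|)) (sphereMeasure n) →
    (∫ y, |Ω y| * Real.log (2 + |Ω y|) ∂(sphereMeasure n)) = 1 →
    ∀ E : ℕ → Set (unitSphere n),
      (∀ m, E m = {y | (2 : ℝ) ^ (m - 1 : ℤ) < |Ω y| ∧ |Ω y| ≤ (2 : ℝ) ^ (m : ℤ)}) →
    ∀ Λ : Set ℕ,
      Λ = {0} ∪ {m : ℕ | 1 ≤ m ∧
        ENNReal.ofReal ((2 : ℝ) ^ (-(4 * (m : ℤ)))) < sphereMeasure n (E m)} →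
    ∀ g : ℕ → unitSphere n → ℝ,
      (∀ m, g m = if m ∈ Λ ∧ m ≠ 0 then
          (fun y => Set.indicator (E m) Ω y -
            ((sphereMeasure n Set.univ).toReal)⁻¹ * ∫ z in E m, Ω z ∂(sphereMeasure n))
        else 0) →
    ∀ Ω₀ : unitSphere n → ℝ,
      (∀ y, Ω₀ y = Ω y - ∑' m, g m y) →
    ((∀ m ∈ Λ, m ≠ 0 → ∫ y, g m y ∂(sphereMeasure n) = 0) ∧
     (∀ y, HasSum (fun m : ℕ => if m = 0 then Ω₀ y else g m y) (Ω y)) ∧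
     ((∫⁻ y, ENNReal.ofReal ((Ω₀ y) ^ 2) ∂(sphereMeasure n)) ^ (1 / (2 : ℝ)) +
        ∑' m : ℕ, (m : ℝ≥0∞) * ∫⁻ y, ENNReal.ofReal |g m y| ∂(sphereMeasure n) ≤
        (C : ℝ≥0∞))) :=
  stmt17_general n
end
end
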